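/- Let x be a free ultrafilter on ℕ and {f_ξ : ξ < 𝔟} a <*-increasing, <*-unbounded family of strictly increasing functions. If a family A of infinite subsets of ℕ converges to x, A is hereditarily unreapable, {f_ξ : ξ < 𝔟} is unbounded in the order <_x, and |A| is a regular cardinal, then |A| = 𝔡. -/

import Mathlib

open Set Filter Cardinal

/-- `a ⊆* b` : `a` is almost contained in `b` (mod finite). -/
def almostLE (a b : Set ℕ) : Prop := (a \ b).Finite

/-- `f <* g` : eventual domination mod finite. -/
def domLT (f g : ℕ → ℕ) : Prop := {k | g k ≤ f k}.Finite

/-- The bounding number 𝔟. -/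
noncomputable def bNum : Cardinal :=
  sInf { c | ∃ F : Set (ℕ → ℕ), Cardinal.mk F = c ∧ ∀ g : ℕ → ℕ, ∃ f ∈ F, ¬ domLT f g }

/-- The dominating number 𝔡. -/
noncomputable def dNum : Cardinal :=
  sInf { c | ∃ F : Set (ℕ → ℕ), Cardinal.mk F = c ∧ ∀ g : ℕ → ℕ, ∃ f ∈ F, domLT g f }

/-- `c` reaps the family `A`. -/
def Reaps (c : Set ℕ) (A : Set (Set ℕ)) : Prop :=
  ∀ a ∈ A, (a ∩ c).Infinite ∧ (a \ c).Infinite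

/-- The reaping number 𝔯. -/
noncomputable def rNum : Cardinal :=
  sInf { c | ∃ A : Set (Set ℕ), Cardinal.mk A = c ∧ (∀ a ∈ A, a.Infinite) ∧
    ∀ d : Set ℕ, ¬ Reaps d A }

/-- The splitting number 𝔰. -/
noncomputable def sNum : Cardinal :=
  sInf { c | ∃ A : Set (Set ℕ), Cardinal.mk A = c ∧ ∀ b : Set ℕ, b.Infinite →
    ∃ a ∈ A, (b ∩ a).Infinite ∧ (b \ a).Infinite }

/-- `next(a,k)`, the least element of `a` above `k`. -/
noncomputable def nxt (a : Set ℕ) (k : ℕ) : ℕ := sInf {n | n ∈ a ∧ k < n}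

/-- ℕ*, the Stone–Čech remainder, realized as the space of free ultrafilters on ℕ. -/
abbrev NStar : Type := {x : Ultrafilter ℕ // (Filter.cofinite : Filter ℕ) ≤ ↑x}

/-- For `a ⊆ ℕ`, the basic clopen set `a*` of free ultrafilters containing `a`. -/
def setStar (a : Set ℕ) : Set NStar := {x | a ∈ x.1}

/-- The ideal `I_A = { a ⊆ ℕ : a* ⊆ A }`. -/
def idealOf (A : Set NStar) : Set (Set ℕ) := {a | setStar a ⊆ A}

/-- `A` is almost clopen: the closure of an open set with a unique boundary point. -/
def AlmostClopen (A : Set NStar) : Prop :=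
  (∃ U : Set NStar, IsOpen U ∧ A = closure U) ∧ ∃! x : NStar, x ∈ frontier A

/-- `x` is a tie-point as witnessed by the closed sets `A`, `B`. -/
def TiePoint {X : Type*} [TopologicalSpace X] (x : X) (A B : Set X) : Prop :=
  IsClosed A ∧ IsClosed B ∧ A ∪ B = Set.univ ∧ A ∩ B = {x} ∧
    x ∈ closure (A \ {x}) ∧ x ∈ closure (B \ {x})

/-- An almost clopen set `A` is simple of type `κ`: `I_A` has a strictly ⊆*-increasing,
⊆*-cofinal chain of order type `κ`. -/
def SimpleType (A : Set NStar) (κ : Cardinal) : Prop :=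
  ∃ a : Ordinal → Set ℕ,
    (∀ α, α < κ.ord → a α ∈ idealOf A) ∧
    (∀ α β, α < β → β < κ.ord → almostLE (a α) (a β) ∧ (a β \ a α).Infinite) ∧
    (∀ c ∈ idealOf A, ∃ α, α < κ.ord ∧ almostLE c (a α))

/-- The family `A` converges to the ultrafilter `x`. -/
def Converges (A : Set (Set ℕ)) (x : Ultrafilter ℕ) : Prop :=
  ∀ U ∈ x, Cardinal.mk {a : Set ℕ // a ∈ A ∧ (a \ U).Infinite} < Cardinal.mk A

/-- `A` is hereditarily unreapable. -/
def HeredUnreapable (A : Set (Set ℕ)) : Prop :=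
  ∀ B ⊆ A, (∃ c : Set ℕ, Reaps c B) → Cardinal.mk B < Cardinal.mk A

/-- `f <_x g` for an ultrafilter `x`. -/
def ultLT (x : Ultrafilter ℕ) (f g : ℕ → ℕ) : Prop := {n | f n < g n} ∈ x

/-- A fixed `<*`-increasing `<*`-unbounded family `{f_ξ : ξ < 𝔟}` of strictly increasing
functions. -/
def UnbddChain (f : Ordinal → ℕ → ℕ) : Prop :=
  (∀ ξ, ξ < bNum.ord → StrictMono (f ξ)) ∧
  (∀ η ξ, η < ξ → ξ < bNum.ord → domLT (f η) (f ξ)) ∧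
  (∀ g : ℕ → ℕ, ∃ ξ, ξ < bNum.ord ∧ ¬ domLT (f ξ) g)

/-- `x` is an almost `P_λ`-point. -/
def AlmostPPoint (x : Ultrafilter ℕ) (lam : Cardinal) : Prop :=
  ∀ F : Set (Set ℕ), (∀ U ∈ F, U ∈ x) → Cardinal.mk F < lam →
    ∃ p : Set ℕ, p.Infinite ∧ ∀ U ∈ F, almostLE p U

/-! ### Auxiliary lemmas -/

lemma nxt_mem_gt {a : Set ℕ} (ha : a.Infinite) (k : ℕ) : nxt a k ∈ a ∧ k < nxt a k := by
  have hne : {n | n ∈ a ∧ k < n}.Nonempty := by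
    obtain ⟨b, hb, hkb⟩ := ha.exists_gt k
    exact ⟨b, hb, hkb⟩
  exact Nat.sInf_mem hne

/-- A strictly increasing majorant of `g`. -/
def grow (g : ℕ → ℕ) (n : ℕ) : ℕ := (Finset.range (n + 1)).sup g + n + 1

lemma le_grow (g : ℕ → ℕ) {k n : ℕ} (h : k ≤ n) : g k < grow g n := by
  have h1 : g k ≤ (Finset.range (n + 1)).sup g :=
    Finset.le_sup (Finset.mem_range.2 (by omega))
  unfold grow; omega

lemma grow_mono (g : ℕ → ℕ) : Monotone (grow g) := by
  intro m n h
  have h1 : (Finset.range (m + 1)).sup g ≤ (Finset.range (n + 1)).sup g :=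
    Finset.sup_mono (Finset.range_subset_range.2 (by omega))
  unfold grow; omega

lemma lt_grow (g : ℕ → ℕ) (n : ℕ) : n < grow g n := by unfold grow; omega

/-- Interval endpoints generated by iterating `grow h`. -/
def iseq (h : ℕ → ℕ) : ℕ → ℕ
  | 0 => 0
  | k + 1 => grow h (iseq h k)

lemma iseq_strictMono (h : ℕ → ℕ) : StrictMono (iseq h) :=
  strictMono_nat_of_lt_succ fun k => lt_grow h (iseq h k)

lemma self_le_iseq (h : ℕ → ℕ) (k : ℕ) : k ≤ iseq h k := by
  induction k with
  | zero => simp [iseq]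
  | succ k ih =>
    have h1 := lt_grow h (iseq h k)
    show k + 1 ≤ grow h (iseq h k)
    omega

lemma ioo_eq (h : ℕ → ℕ) {i j p : ℕ} (hi : iseq h i < p ∧ p < iseq h (i + 1))
    (hj : iseq h j < p ∧ p < iseq h (j + 1)) : i = j := by
  by_contra hne
  rcases Nat.lt_or_ge i j with hl | hge
  · have hmono : iseq h (i + 1) ≤ iseq h j := (iseq_strictMono h).monotone (by omega)
    omega
  · have hl : j < i := by omega
    have hmono : iseq h (j + 1) ≤ iseq h i := (iseq_strictMono h).monotone (by omega)
    omega

lemma hit {a : Set ℕ} (ha : a.Infinite) {h : ℕ → ℕ} (hd : domLT (nxt a) h) :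
    ∃ N : ℕ, ∀ k, N ≤ k →
      nxt a (iseq h k) ∈ a ∧ iseq h k < nxt a (iseq h k) ∧ nxt a (iseq h k) < iseq h (k + 1) := by
  have hfin : {k | h k ≤ nxt a k}.Finite := hd
  obtain ⟨N, hN⟩ := hfin.bddAbove
  refine ⟨N + 1, fun k hk => ?_⟩
  obtain ⟨hmem, hgt⟩ := nxt_mem_gt ha (iseq h k)
  refine ⟨hmem, hgt, ?_⟩
  have hself := self_le_iseq h k
  have hknot : iseq h k ∉ {k | h k ≤ nxt a k} := by
    intro hcon
    have := hN hcon
    omega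
  have h1 : nxt a (iseq h k) < h (iseq h k) := by
    simp only [Set.mem_setOf_eq, not_le] at hknot
    exact hknot
  have h2 : h (iseq h k) < grow h (iseq h k) := le_grow h le_rfl
  show nxt a (iseq h k) < grow h (iseq h k)
  omega

lemma reap_of_dom {B : Set (Set ℕ)} (hB : ∀ a ∈ B, a.Infinite) {h : ℕ → ℕ}
    (hd : ∀ a ∈ B, domLT (nxt a) h) : ∃ c, Reaps c B := by
  refine ⟨⋃ k, Set.Ioo (iseq h (2 * k)) (iseq h (2 * k + 1)), fun a ha => ?_⟩
  obtain ⟨N, hN⟩ := hit (hB a ha) (hd a ha)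
  constructor
  · apply Set.infinite_of_forall_exists_gt
    intro M
    obtain ⟨hmem, hgt, hlt⟩ := hN (2 * (N + M + 1)) (by omega)
    refine ⟨nxt a (iseq h (2 * (N + M + 1))),
      ⟨hmem, Set.mem_iUnion.2 ⟨N + M + 1, ⟨hgt, hlt⟩⟩⟩, ?_⟩
    have := self_le_iseq h (2 * (N + M + 1))
    omega
  · apply Set.infinite_of_forall_exists_gt
    intro M
    obtain ⟨hmem, hgt, hlt⟩ := hN (2 * (N + M + 1) + 1) (by omega)
    refine ⟨nxt a (iseq h (2 * (N + M + 1) + 1)), ⟨hmem, ?_⟩, ?_⟩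
    · intro hcon
      obtain ⟨j, hj⟩ := Set.mem_iUnion.1 hcon
      obtain ⟨hj1, hj2⟩ := hj
      have := ioo_eq h ⟨hj1, hj2⟩ ⟨hgt, hlt⟩
      omega
    · have := self_le_iseq h (2 * (N + M + 1) + 1)
      omega

lemma dNum_mem : ∃ F : Set (ℕ → ℕ), Cardinal.mk F = dNum ∧ ∀ g : ℕ → ℕ, ∃ f ∈ F, domLT g f := by
  have hne : { c | ∃ F : Set (ℕ → ℕ), Cardinal.mk F = c ∧
      ∀ g : ℕ → ℕ, ∃ f ∈ F, domLT g f }.Nonempty := by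
    refine ⟨_, Set.univ, rfl, fun g => ⟨fun n => g n + 1, trivial, ?_⟩⟩
    have : {k | (fun n => g n + 1) k ≤ g k} = ∅ := by
      ext k; simp
    unfold domLT
    rw [this]
    exact Set.finite_empty
  have hmem := csInf_mem hne
  obtain ⟨F, hF1, hF2⟩ := hmem
  exact ⟨F, hF1, hF2⟩

theorem stmt7 (x : Ultrafilter ℕ) (hx : (Filter.cofinite : Filter ℕ) ≤ ↑x)
    (f : Ordinal → ℕ → ℕ) (hf : UnbddChain f)
    (A : Set (Set ℕ)) (hAinf : ∀ a ∈ A, a.Infinite)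
    (hconv : Converges A x)
    (hher : HeredUnreapable A)
    (hunbdd : ∀ g : ℕ → ℕ, ∃ ξ, ξ < bNum.ord ∧ ¬ ultLT x (f ξ) g)
    (hreg : (Cardinal.mk A).IsRegular) :
    Cardinal.mk A = dNum := by
  classical
  have hκinf : ℵ₀ ≤ Cardinal.mk A := hreg.aleph0_le
  -- Step A : bNum ≤ #A
  have hbκ : bNum ≤ Cardinal.mk A := by
    by_contra hb
    push_neg at hb
    have hGκ : Cardinal.mk ↥(nxt '' A) ≤ Cardinal.mk A := Cardinal.mk_image_le
    have hbd : ∃ g : ℕ → ℕ, ∀ f' ∈ nxt '' A, domLT f' g := by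
      by_contra hc
      push_neg at hc
      have hmem : Cardinal.mk ↥(nxt '' A) ∈ { c | ∃ F : Set (ℕ → ℕ), Cardinal.mk F = c ∧
          ∀ g : ℕ → ℕ, ∃ f ∈ F, ¬ domLT f g } := ⟨nxt '' A, rfl, hc⟩
      have : bNum ≤ Cardinal.mk ↥(nxt '' A) := csInf_le (OrderBot.bddBelow _) hmem
      exact absurd (this.trans hGκ) (not_le.2 hb)
    obtain ⟨g, hg⟩ := hbd
    obtain ⟨c, hc⟩ := reap_of_dom hAinf (fun a ha => hg (nxt a) ⟨a, ha, rfl⟩)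
    exact lt_irrefl _ (hher A subset_rfl ⟨c, hc⟩)
  -- Step B : dNum ≤ #A
  have hdκ : dNum ≤ Cardinal.mk A := by
    set e := Ordinal.ToType.mk (o := bNum.ord) with he
    set ψ : bNum.ord.ToType × {a : Set ℕ // a ∈ A} → (ℕ → ℕ) :=
      fun p => fun n => f (e.symm p.1).1 (nxt p.2.1 n) + 1 with hψ
    have hDdom : ∀ g : ℕ → ℕ, ∃ F ∈ Set.range ψ, domLT g F := by
      intro g
      obtain ⟨ξ, hξ, hxg⟩ := hunbdd (grow g)
      have hUc : {n | f ξ n < grow g n}ᶜ ∈ x :=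
        (Ultrafilter.compl_mem_iff_notMem).2 hxg
      have hUeq : {n | f ξ n < grow g n}ᶜ = {n | grow g n ≤ f ξ n} := by
        ext n; simp [not_lt]
      have hU : {n | grow g n ≤ f ξ n} ∈ x := hUeq ▸ hUc
      obtain ⟨a, haA, haU⟩ : ∃ a ∈ A, (a \ {n | grow g n ≤ f ξ n}).Finite := by
        by_contra hno
        push_neg at hno
        have hinj : Function.Injective
            (fun b : {a : Set ℕ // a ∈ A} =>
              (⟨b.1, b.2, hno b.1 b.2⟩ :
                {a : Set ℕ // a ∈ A ∧ (a \ {n | grow g n ≤ f ξ n}).Infinite})) := by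
          intro b1 b2 hb12
          simp only [Subtype.mk.injEq] at hb12
          exact Subtype.ext hb12
        have hle : Cardinal.mk A ≤
            Cardinal.mk {a : Set ℕ // a ∈ A ∧ (a \ {n | grow g n ≤ f ξ n}).Infinite} :=
          Cardinal.mk_le_of_injective hinj
        exact absurd (hconv _ hU) (not_lt.2 hle)
      obtain ⟨N, hNub⟩ := haU.bddAbove
      refine ⟨ψ (e ⟨ξ, hξ⟩, ⟨a, haA⟩), ⟨_, rfl⟩, ?_⟩
      have hval : ((e.symm (e ⟨ξ, hξ⟩)) : Ordinal) = ξ := by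
        rw [OrderIso.symm_apply_apply]
      show {k | ψ (e ⟨ξ, hξ⟩, ⟨a, haA⟩) k ≤ g k}.Finite
      apply Set.Finite.subset (Set.finite_Iic N)
      intro k hk
      simp only [Set.mem_setOf_eq, hψ, hval] at hk
      by_contra hkN
      have hNk : N < k := by simpa [Set.mem_Iic, not_le] using hkN
      obtain ⟨hma, hmk⟩ := nxt_mem_gt (hAinf a haA) k
      have hmU : nxt a k ∈ {n | grow g n ≤ f ξ n} := by
        by_contra hmU
        have hmem2 : nxt a k ∈ a \ {n | grow g n ≤ f ξ n} := ⟨hma, hmU⟩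
        have := hNub hmem2
        omega
      have h1 : g k < grow g (nxt a k) := le_grow g (le_of_lt hmk)
      have h2 : grow g (nxt a k) ≤ f ξ (nxt a k) := hmU
      omega
    have hmkD : Cardinal.mk ↥(Set.range ψ) ≤ Cardinal.mk A := by
      have h1 : Cardinal.mk ↥(Set.range ψ) ≤
          Cardinal.mk (bNum.ord.ToType × {a : Set ℕ // a ∈ A}) := Cardinal.mk_range_le
      have h2 : Cardinal.mk (bNum.ord.ToType × {a : Set ℕ // a ∈ A}) =
          bNum * Cardinal.mk A := by
        rw [Cardinal.mk_prod, Cardinal.lift_id, Cardinal.lift_id, Cardinal.mk_ord_toType]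
      have h3 : bNum * Cardinal.mk A ≤ Cardinal.mk A * Cardinal.mk A :=
        mul_le_mul_left hbκ _
      rw [Cardinal.mul_eq_self hκinf] at h3
      exact h1.trans (h2 ▸ h3)
    have hmem : Cardinal.mk ↥(Set.range ψ) ∈ { c | ∃ F : Set (ℕ → ℕ),
        Cardinal.mk F = c ∧ ∀ g : ℕ → ℕ, ∃ f ∈ F, domLT g f } := ⟨Set.range ψ, rfl, hDdom⟩
    exact (csInf_le (OrderBot.bddBelow _) hmem).trans hmkD
  -- Step C : #A ≤ dNum
  have hκd : Cardinal.mk A ≤ dNum := by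
    by_contra hlt
    push_neg at hlt
    obtain ⟨F, hFmk, hFdom⟩ := dNum_mem
    have hFκ : Cardinal.mk ↥F < Cardinal.mk A := by rw [hFmk]; exact hlt
    set T : ↥F → Set (Set ℕ) := fun f' => {a | a ∈ A ∧ domLT (nxt a) f'.1} with hT
    have hcover : A ⊆ ⋃ f', T f' := by
      intro a ha
      obtain ⟨f', hf', hd⟩ := hFdom (nxt a)
      exact Set.mem_iUnion.2 ⟨⟨f', hf'⟩, ha, hd⟩
    have hex : ∃ f', ¬ Cardinal.mk ↥(T f') < Cardinal.mk A := by
      by_contra hall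
      push_neg at hall
      have h1 : Cardinal.mk A ≤ Cardinal.mk ↥(⋃ f', T f') :=
        Cardinal.mk_le_mk_of_subset hcover
      have h2 : Cardinal.mk ↥(⋃ f', T f') ≤ Cardinal.sum fun f' => Cardinal.mk ↥(T f') :=
        Cardinal.mk_iUnion_le_sum_mk
      have h3 : Cardinal.sum (fun f' => Cardinal.mk ↥(T f')) < Cardinal.mk A :=
        Cardinal.sum_lt_of_isRegular hreg hFκ hall
      exact absurd (h1.trans h2) (not_le.2 h3)
    obtain ⟨f', hf'⟩ := hex
    have hsub : T f' ⊆ A := fun a ha => ha.1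
    obtain ⟨c, hc⟩ := reap_of_dom (fun a ha => hAinf a (hsub ha)) (fun a ha => ha.2)
    exact hf' (hher (T f') hsub ⟨c, hc⟩)
  exact le_antisymm hκd hdκ
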